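/- Let A be a commutative local ring and n ≥ 1. Then every matrix in SL_n(A) (i.e., every n×n matrix over A of determinant 1) is a finite product of elementary transvections (matrices differing from the identity in exactly one off-diagonal entry). -/

import Mathlib

/-!
Transvections generate a submonoid `E` of the matrix monoid in which the inverse of every
generator is again a generator, so `P * M ∈ E` with `P ∈ E` forces `M ∈ E`. Over a local ring a
row of a matrix with unit determinant contains a unit entry: otherwise the row times the
corresponding column of the adjugate, which is the determinant, would lie in the maximal ideal.
One or two column operations turn this unit into a pivot `1` on the diagonal, and then row and
column operations clear the pivot's row and column, leaving the Schur complement on the other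
indices. Induct on the set of indices outside which the matrix agrees with the identity; when a
single index is left, the determinant forces the pivot to be `1` already.
-/

namespace Matrix

variable {n R : Type*} [DecidableEq n] [CommRing R]

def clearRowCol (M : Matrix n n R) (a : n) : Matrix n n R :=
  of fun i j => if i = a ∨ j = a then (1 : Matrix n n R) i j else M i j - M i a * M a j

def IdentityOutside (s : Finset n) (M : Matrix n n R) : Prop :=
  ∀ i j, i ∉ s ∨ j ∉ s → M i j = (1 : Matrix n n R) i j

theorem IdentityOutside.eq_one {M : Matrix n n R} (hM : IdentityOutside ∅ M) : M = 1 :=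
  ext fun i j => hM i j (.inl (Finset.notMem_empty i))

theorem IdentityOutside.clearRowCol {M : Matrix n n R} {a : n} {t : Finset n}
    (hM : IdentityOutside (insert a t) M) : IdentityOutside t (M.clearRowCol a) := by
  intro i j hij
  rw [Matrix.clearRowCol, of_apply]
  split_ifs with ha
  · rfl
  · push Not at ha
    have hout : i ∉ insert a t ∨ j ∉ insert a t := by simpa [ha.1, ha.2] using hij
    rcases hout with hi | hj
    · simp [hM i j (.inl hi), hM i a (.inl hi), one_apply_ne ha.1]
    · simp [hM i j (.inr hj), hM a j (.inr hj), one_apply_ne ha.2.symm]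

variable [Fintype n]

variable (n R) in
def elementarySubmonoid : Submonoid (Matrix n n R) :=
  Submonoid.closure {M | ∃ i j c, i ≠ j ∧ transvection i j c = M}

theorem transvection_mem_elementarySubmonoid {i j : n} (h : i ≠ j) (c : R) :
    transvection i j c ∈ elementarySubmonoid n R :=
  Submonoid.subset_closure ⟨i, j, c, h, rfl⟩

theorem det_eq_one_of_mem_elementarySubmonoid {P : Matrix n n R}
    (hP : P ∈ elementarySubmonoid n R) : P.det = 1 := by
  refine (Submonoid.closure_le (S := MonoidHom.mker (detMonoidHom : Matrix n n R →* R))).2 ?_ hP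
  rintro _ ⟨i, j, c, h, rfl⟩
  exact det_transvection_of_ne i j h c

theorem mem_elementarySubmonoid_of_mul_mem_left {P M : Matrix n n R}
    (hP : P ∈ elementarySubmonoid n R) (h : P * M ∈ elementarySubmonoid n R) :
    M ∈ elementarySubmonoid n R := by
  induction hP using Submonoid.closure_induction generalizing M with
  | mem _ hT =>
    obtain ⟨i, j, c, hij, rfl⟩ := hT
    have hM : M = transvection i j (-c) * (transvection i j c * M) := by
      rw [← Matrix.mul_assoc, transvection_mul_transvection_same _ _ hij, neg_add_cancel,
        transvection_zero, Matrix.one_mul]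
    exact hM ▸ mul_mem (transvection_mem_elementarySubmonoid hij _) h
  | one => simpa using h
  | mul P Q _ _ ihP ihQ => exact ihQ (ihP (by rwa [← Matrix.mul_assoc]))

theorem mem_elementarySubmonoid_of_mul_mem_right {P M : Matrix n n R}
    (hP : P ∈ elementarySubmonoid n R) (h : M * P ∈ elementarySubmonoid n R) :
    M ∈ elementarySubmonoid n R := by
  induction hP using Submonoid.closure_induction generalizing M with
  | mem _ hT =>
    obtain ⟨i, j, c, hij, rfl⟩ := hT
    have hM : M = M * transvection i j c * transvection i j (-c) := by
      rw [Matrix.mul_assoc, transvection_mul_transvection_same _ _ hij, add_neg_cancel,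
        transvection_zero, Matrix.mul_one]
    exact hM ▸ mul_mem h (transvection_mem_elementarySubmonoid hij _)
  | one => simpa using h
  | mul P Q _ _ ihP ihQ => exact ihP (ihQ (by rwa [Matrix.mul_assoc]))

theorem one_add_sum_single_col_mem_elementarySubmonoid {a : n} {s : Finset n} (ha : a ∉ s)
    (x : n → R) : 1 + ∑ i ∈ s, single i a (x i) ∈ elementarySubmonoid n R := by
  induction s using Finset.induction_on with
  | empty => simp
  | insert b t hb ih =>
    have hab : a ≠ b := fun h => ha (h ▸ Finset.mem_insert_self a t)
    have key : 1 + ∑ i ∈ insert b t, single i a (x i) =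
        (1 + ∑ i ∈ t, single i a (x i)) * transvection b a (x b) := by
      simp only [Finset.sum_insert hb, transvection, Matrix.mul_add, Matrix.mul_one,
        Matrix.add_mul, Matrix.one_mul, Finset.sum_mul, single_mul_single_of_ne _ _ _ _ hab,
        Finset.sum_const_zero, add_zero]
      abel
    rw [key]
    exact mul_mem (ih fun h => ha (Finset.mem_insert_of_mem h))
      (transvection_mem_elementarySubmonoid (Ne.symm hab) _)

theorem transpose_mem_elementarySubmonoid {P : Matrix n n R}
    (hP : P ∈ elementarySubmonoid n R) : Pᵀ ∈ elementarySubmonoid n R := by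
  induction hP using Submonoid.closure_induction with
  | mem _ hT =>
    obtain ⟨i, j, c, hij, rfl⟩ := hT
    simpa [transvection] using transvection_mem_elementarySubmonoid hij.symm c
  | one => simp
  | mul P Q _ _ ihP ihQ => simpa using mul_mem ihQ ihP

theorem one_add_sum_single_col_mul_apply (s : Finset n) (a : n) (x : n → R) (N : Matrix n n R)
    (i j : n) :
    ((1 + ∑ k ∈ s, single k a (x k)) * N) i j = N i j + if i ∈ s then x i * N a j else 0 := by
  simp only [Matrix.add_mul, Matrix.one_mul, add_apply, Finset.sum_mul, Matrix.sum_apply]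
  split_ifs with h
  · rw [Finset.sum_eq_single_of_mem i h fun k _ hk => single_mul_apply_of_ne _ _ _ _ _ hk.symm _,
      single_mul_apply_same]
  · rw [Finset.sum_eq_zero fun k hk =>
      single_mul_apply_of_ne _ _ _ _ _ (ne_of_mem_of_not_mem hk h).symm _]

theorem mul_one_add_sum_single_row_apply (s : Finset n) (a : n) (x : n → R)
    (N : Matrix n n R) (i j : n) :
    (N * (1 + ∑ k ∈ s, single a k (x k))) i j = N i j + if j ∈ s then N i a * x j else 0 := by
  simp only [Matrix.mul_add, Matrix.mul_one, add_apply, Finset.mul_sum, Matrix.sum_apply]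
  split_ifs with h
  · rw [Finset.sum_eq_single_of_mem j h fun k _ hk => mul_single_apply_of_ne _ _ _ _ _ hk.symm _,
      mul_single_apply_same]
  · rw [Finset.sum_eq_zero fun k hk =>
      mul_single_apply_of_ne _ _ _ _ _ (ne_of_mem_of_not_mem hk h).symm _]

theorem one_add_sum_single_row_mem_elementarySubmonoid {a : n} {s : Finset n} (ha : a ∉ s)
    (x : n → R) : 1 + ∑ k ∈ s, single a k (x k) ∈ elementarySubmonoid n R := by
  simpa [transpose_sum] using
    transpose_mem_elementarySubmonoid (one_add_sum_single_col_mem_elementarySubmonoid ha x)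

theorem exists_mul_mul_eq_clearRowCol {M : Matrix n n R} {a : n} (ha : M a a = 1) :
    ∃ P ∈ elementarySubmonoid n R, ∃ Q ∈ elementarySubmonoid n R, P * M * Q = M.clearRowCol a := by
  refine ⟨_, one_add_sum_single_col_mem_elementarySubmonoid (Finset.notMem_erase a .univ)
      fun k => -M k a,
    _, one_add_sum_single_row_mem_elementarySubmonoid (Finset.notMem_erase a .univ)
      fun k => -M a k, ext fun i j => ?_⟩
  rw [clearRowCol, of_apply, mul_one_add_sum_single_row_apply, one_add_sum_single_col_mul_apply,
    one_add_sum_single_col_mul_apply]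
  by_cases hi : i = a <;> by_cases hj : j = a
  · subst hi hj
    simpa using ha
  · subst hi
    simp [hj, ha, one_apply_ne' hj]
  · subst hj
    simp [hi, ha, one_apply_ne hi]
  · simp [hi, hj, ha, sub_eq_add_neg]

theorem exists_isUnit_apply_of_isUnit_det [IsLocalRing R] {M : Matrix n n R}
    (hM : IsUnit M.det) (a : n) : ∃ j, IsUnit (M a j) := by
  by_contra! h
  have hmem : ∑ j, M a j * adjugate M j a ∈ IsLocalRing.maximalIdeal R :=
    Ideal.sum_mem _ fun j _ => Ideal.mul_mem_right _ _ ((IsLocalRing.mem_maximalIdeal _).2 (h j))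
  rw [← mul_apply, mul_adjugate, smul_apply, one_apply_eq, smul_eq_mul, mul_one] at hmem
  exact (IsLocalRing.mem_maximalIdeal _).1 hmem hM

namespace IdentityOutside

variable {s : Finset n} {M : Matrix n n R}

theorem det_eq {a : n} (hM : IdentityOutside {a} M) : M.det = M a a := by
  have hdiag : M = diagonal (Function.update 1 a (M a a)) := by
    ext i j
    obtain rfl | hij := eq_or_ne i j
    · obtain rfl | hia := eq_or_ne i a
      · simp
      · simp [hM i i (.inl (by simpa using hia)), hia]
    · have hout : i ∉ ({a} : Finset n) ∨ j ∉ ({a} : Finset n) := by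
        by_contra! h
        simp only [Finset.mem_singleton] at h
        exact hij (h.1.trans h.2.symm)
      simp [hM i j hout, hij]
  rw [hdiag, det_diagonal, Finset.prod_update_of_mem (Finset.mem_univ a)]
  simp

theorem mul_transvection (hM : IdentityOutside s M) {i j : n} (hi : i ∈ s) (hj : j ∈ s) (c : R) :
    IdentityOutside s (M * transvection i j c) := by
  intro k l hkl
  by_cases hl : l = j
  · subst hl
    have hk : k ∉ s := hkl.resolve_right (not_not.2 hj)
    rw [mul_transvection_apply_same, hM k l (.inl hk), hM k i (.inl hk),
      one_apply_ne (ne_of_mem_of_not_mem hi hk).symm]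
    simp
  · rw [mul_transvection_apply_of_ne _ _ _ _ hl, hM k l hkl]

theorem exists_mul_apply_eq_one_of_isUnit (hM : IdentityOutside s M) {a j b : n}
    (hu : IsUnit (M a j)) (hj : j ∈ s) (hb : b ∈ s) (hjb : j ≠ b) :
    ∃ P ∈ elementarySubmonoid n R, IdentityOutside s (M * P) ∧ (M * P) a b = 1 := by
  refine ⟨transvection j b ((1 - M a b) * ↑hu.unit⁻¹), transvection_mem_elementarySubmonoid hjb _,
    hM.mul_transvection hj hb _, ?_⟩
  rw [mul_transvection_apply_same, mul_assoc, hu.val_inv_mul]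
  ring

theorem exists_mul_apply_eq_one [IsLocalRing R] (hM : IdentityOutside s M) (hdet : M.det = 1)
    {a : n} (ha : a ∈ s) :
    ∃ P ∈ elementarySubmonoid n R, IdentityOutside s (M * P) ∧ (M * P) a a = 1 := by
  obtain ⟨j, hu⟩ := exists_isUnit_apply_of_isUnit_det (hdet ▸ isUnit_one) a
  have hj : j ∈ s := by
    by_contra hj
    rw [hM a j (.inr hj), one_apply_ne (ne_of_mem_of_not_mem ha hj)] at hu
    exact not_isUnit_zero hu
  obtain hja | rfl := ne_or_eq j a
  · exact hM.exists_mul_apply_eq_one_of_isUnit hu hj ha hja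
  by_cases hs : ∃ b ∈ s, b ≠ j
  · obtain ⟨b, hb, hbj⟩ := hs
    obtain ⟨P, hP, hMP, h1⟩ := hM.exists_mul_apply_eq_one_of_isUnit hu hj hb hbj.symm
    obtain ⟨Q, hQ, hMPQ, h2⟩ := hMP.exists_mul_apply_eq_one_of_isUnit (h1 ▸ isUnit_one) hb hj hbj
    exact ⟨P * Q, mul_mem hP hQ, by rwa [← Matrix.mul_assoc], by rwa [← Matrix.mul_assoc]⟩
  · push Not at hs
    obtain rfl : s = {j} := Finset.eq_singleton_iff_unique_mem.2 ⟨hj, hs⟩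
    exact ⟨1, one_mem _, by rwa [Matrix.mul_one], by rw [Matrix.mul_one, ← hM.det_eq, hdet]⟩

theorem mem_elementarySubmonoid [IsLocalRing R] (hM : IdentityOutside s M) (hdet : M.det = 1) :
    M ∈ elementarySubmonoid n R := by
  induction s using Finset.induction_on generalizing M with
  | empty => exact hM.eq_one ▸ one_mem _
  | insert a t _ ih =>
    obtain ⟨P, hP, hMP, hpiv⟩ := hM.exists_mul_apply_eq_one hdet (Finset.mem_insert_self a t)
    obtain ⟨L, hL, U, hU, hLMU⟩ := exists_mul_mul_eq_clearRowCol hpiv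
    have hdet' : (L * (M * P) * U).det = 1 := by
      simp [hdet, det_eq_one_of_mem_elementarySubmonoid, hP, hL, hU]
    refine mem_elementarySubmonoid_of_mul_mem_right hP <|
      mem_elementarySubmonoid_of_mul_mem_left hL <| mem_elementarySubmonoid_of_mul_mem_right hU ?_
    exact ih (hLMU ▸ hMP.clearRowCol) hdet'

end IdentityOutside

theorem mem_elementarySubmonoid_of_det_eq_one [IsLocalRing R] {M : Matrix n n R}
    (hM : M.det = 1) : M ∈ elementarySubmonoid n R :=
  IdentityOutside.mem_elementarySubmonoid (s := .univ) (fun i j h => by simp at h) hM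

end Matrix

/-- Over a commutative local ring, every matrix of determinant `1` is a finite product of
elementary transvections (matrices of the form `1 + c • E i j` with `i ≠ j`). -/
theorem sl_n_generated_by_transvections
    (A : Type*) [CommRing A] [IsLocalRing A] (n : ℕ)
    (M : Matrix (Fin n) (Fin n) A) (hM : M.det = 1) :
    ∃ L : List (Matrix (Fin n) (Fin n) A),
      (∀ N ∈ L, ∃ (i j : Fin n) (c : A), i ≠ j ∧ N = Matrix.transvection i j c) ∧
      M = L.prod := by
  obtain ⟨L, hL, rfl⟩ :=
    Submonoid.exists_list_of_mem_closure (Matrix.mem_elementarySubmonoid_of_det_eq_one hM)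
  refine ⟨L, fun N hN => ?_, rfl⟩
  obtain ⟨i, j, c, hij, rfl⟩ := hL N hN
  exact ⟨i, j, c, hij, rfl⟩
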